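/- arXiv:1705.02920 — 6 statements merged into one kernel-verified Lean document; each statement's English description precedes it below -/
import Mathlib

section
/- Let Δ ⊂ ℝ² be the triangle with vertices (−1,0), (0,−1/2), (3,1). For every real ξ ≠ 0, ∫_Δ u₂ e^{ξ u₁} du₁ du₂ = (1/(16ξ³)) · ((4ξ−3)e^{3ξ} + 8ξ + 3e^{−ξ}). -/
/-!
The triangle is the region between the graphs of `l x = max ((x - 1) / 2) (-(x + 1) / 2)` and
`h x = (x + 1) / 4` over `-1 ≤ x ≤ 3`, so by Fubini the integral is
`∫ e^{ξx} (h(x)² - l(x)²) / 2 dx`. Since `l` has its corner at `x = 0`, on each of `[-1, 0]` and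
`[0, 3]` the factor `(h² - l²) / 2` is a quadratic polynomial, and `e^{ξx}` times a quadratic
has an explicit antiderivative.
-/

open MeasureTheory Set

section Fubini

variable {α β E : Type*} [MeasurableSpace α] [MeasurableSpace β] {μ : Measure α}
  {ν : Measure β} [SFinite μ] [SFinite ν] [NormedAddCommGroup E] [NormedSpace ℝ E]

theorem setIntegral_prod_eq_integral_setIntegral_preimage {S : Set (α × β)}
    (hS : MeasurableSet S) {F : α × β → E} (hF : IntegrableOn F S (μ.prod ν)) :
    ∫ p in S, F p ∂μ.prod ν = ∫ x, ∫ y in Prod.mk x ⁻¹' S, F (x, y) ∂ν ∂μ := by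
  rw [← integral_indicator hS, integral_prod _ ((integrable_indicator_iff hS).2 hF)]
  congr 1 with x
  rw [← integral_indicator (measurable_prodMk_left hS)]
  rfl

def verticalRegion (a b : ℝ) (f g : ℝ → ℝ) : Set (ℝ × ℝ) :=
  {p | p.1 ∈ Icc a b ∧ p.2 ∈ Icc (f p.1) (g p.1)}

theorem measurableSet_verticalRegion (a b : ℝ) {f g : ℝ → ℝ} (hf : Measurable f)
    (hg : Measurable g) : MeasurableSet (verticalRegion a b f g) := by
  unfold verticalRegion
  simp only [mem_Icc, ofPred_and]
  exact ((measurableSet_le measurable_const measurable_fst).inter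
    (measurableSet_le measurable_fst measurable_const)).inter
    ((measurableSet_le (hf.comp measurable_fst) measurable_snd).inter
    (measurableSet_le measurable_snd (hg.comp measurable_fst)))

theorem setIntegral_verticalRegion {a b : ℝ} (hab : a ≤ b) {f g : ℝ → ℝ}
    (hf : Measurable f) (hg : Measurable g) (hfg : ∀ x ∈ Icc a b, f x ≤ g x) {F : ℝ × ℝ → E}
    (hF : IntegrableOn F (verticalRegion a b f g)) :
    ∫ p in verticalRegion a b f g, F p = ∫ x in a..b, ∫ y in f x..g x, F (x, y) := by
  rw [Measure.volume_eq_prod] at hF ⊢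
  rw [setIntegral_prod_eq_integral_setIntegral_preimage
      (measurableSet_verticalRegion a b hf hg) hF,
    intervalIntegral.integral_of_le hab, ← integral_Icc_eq_integral_Ioc,
    ← integral_indicator measurableSet_Icc]
  congr 1 with x
  by_cases hx : x ∈ Icc a b
  · rw [indicator_of_mem hx, intervalIntegral.integral_of_le (hfg x hx),
      ← integral_Icc_eq_integral_Ioc]
    congr 2 with y
    simp only [verticalRegion, mem_preimage, mem_ofPred_eq, hx, true_and]
  · have hempty : Prod.mk x ⁻¹' verticalRegion a b f g = ∅ :=
      eq_empty_of_forall_notMem fun y hy => hx hy.1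
    rw [hempty, indicator_of_notMem hx, Measure.restrict_empty, integral_zero_measure]

end Fubini

theorem integral_exp_mul_mul_quadratic (ξ a b c lo hi : ℝ) (hξ : ξ ≠ 0) :
    ∫ x in lo..hi, Real.exp (ξ * x) * (a * x ^ 2 + b * x + c) =
      Real.exp (ξ * hi) *
          ((a * hi ^ 2 + b * hi + c) / ξ - (2 * a * hi + b) / ξ ^ 2 + 2 * a / ξ ^ 3) -
        Real.exp (ξ * lo) *
          ((a * lo ^ 2 + b * lo + c) / ξ - (2 * a * lo + b) / ξ ^ 2 + 2 * a / ξ ^ 3) := by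
  refine intervalIntegral.integral_eq_sub_of_hasDerivAt (f := fun x => Real.exp (ξ * x) *
      ((a * x ^ 2 + b * x + c) / ξ - (2 * a * x + b) / ξ ^ 2 + 2 * a / ξ ^ 3))
    (fun x _ => ?_)
    ((by fun_prop : Continuous fun x => Real.exp (ξ * x) * (a * x ^ 2 + b * x + c))
      |>.intervalIntegrable _ _)
  have hexp : HasDerivAt (fun x => Real.exp (ξ * x)) (Real.exp (ξ * x) * ξ) x := by
    simpa using ((hasDerivAt_id x).const_mul ξ).exp
  have hpoly : HasDerivAt
      (fun x => (a * x ^ 2 + b * x + c) / ξ - (2 * a * x + b) / ξ ^ 2 + 2 * a / ξ ^ 3)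
      ((2 * a * x + b) / ξ - 2 * a / ξ ^ 2) x := by
    have hsq : HasDerivAt (fun x : ℝ => x ^ 2) (2 * x) x := by simpa using hasDerivAt_pow 2 x
    refine ((((hsq.const_mul a).add ((hasDerivAt_id' x).const_mul b)).add_const c).div_const ξ
      |>.sub ((((hasDerivAt_id' x).const_mul (2 * a)).add_const b).div_const (ξ ^ 2))
      |>.add_const (2 * a / ξ ^ 3)).congr_deriv ?_
    ring
  refine (hexp.mul hpoly).congr_deriv ?_
  field_simp
  ring

theorem mem_triangle_iff (p : ℝ × ℝ) :
    p ∈ verticalRegion (-1) 3 (fun x => max ((x - 1) / 2) (-(x + 1) / 2))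
        (fun x => (x + 1) / 4) ↔
      (p.1 - 1) / 2 ≤ p.2 ∧ -(p.1 + 1) / 2 ≤ p.2 ∧ p.2 ≤ (p.1 + 1) / 4 := by
  simp only [verticalRegion, mem_ofPred_eq, mem_Icc, max_le_iff]
  constructor
  · rintro ⟨-, ⟨h₁, h₂⟩, h₃⟩
    exact ⟨h₁, h₂, h₃⟩
  · rintro ⟨h₁, h₂, h₃⟩
    exact ⟨⟨by linarith, by linarith⟩, ⟨h₁, h₂⟩, h₃⟩

theorem convexHull_triangle_eq :
    convexHull ℝ {((-1 : ℝ), (0 : ℝ)), (0, -1/2), (3, 1)} =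
      verticalRegion (-1) 3 (fun x => max ((x - 1) / 2) (-(x + 1) / 2))
        (fun x => (x + 1) / 4) := by
  refine Subset.antisymm (convexHull_min ?_ ?_) ?_
  · rintro p (rfl | rfl | rfl) <;> rw [mem_triangle_iff] <;> norm_num
  · intro p hp q hq s t hs ht hst
    rw [mem_triangle_iff] at hp hq ⊢
    simp only [Prod.fst_add, Prod.snd_add, Prod.smul_fst, Prod.smul_snd, smul_eq_mul]
    refine ⟨?_, ?_, ?_⟩ <;> nlinarith
  · rintro ⟨x, y⟩ hxy
    obtain ⟨h₁, h₂, h₃⟩ := (mem_triangle_iff _).1 hxy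
    have hbary : ((x, y) : ℝ × ℝ) = ∑ i : Fin 3,
        ![1/2 - x/2 + y, (1 + x - 4*y)/3, (1/2 + x/2 + y)/3] i •
          ![((-1 : ℝ), (0 : ℝ)), (0, -1/2), (3, 1)] i := by
      simp only [Fin.sum_univ_three, Matrix.cons_val, Prod.smul_mk, smul_eq_mul, Prod.mk_add_mk]
      ext <;> simp only <;> ring
    rw [hbary]
    refine (convex_convexHull ℝ _).sum_mem (fun i _ => ?_) ?_ (fun i _ => ?_)
    · fin_cases i <;> simp <;> linarith
    · simp only [Fin.sum_univ_three, Matrix.cons_val]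
      ring
    · apply subset_convexHull
      fin_cases i <;> simp

theorem integral_triangle_fibers (ξ : ℝ) (hξ : ξ ≠ 0) :
    ∫ x in (-1 : ℝ)..3,
        ∫ y in max ((x - 1) / 2) (-(x + 1) / 2)..(x + 1) / 4, y * Real.exp (ξ * x) =
      (1/(16*ξ^3)) * ((4*ξ-3)*Real.exp (3*ξ) + 8*ξ + 3*Real.exp (-ξ)) := by
  simp_rw [intervalIntegral.integral_mul_const, integral_id]
  have hcont : Continuous fun x : ℝ =>
      (((x + 1) / 4) ^ 2 - max ((x - 1) / 2) (-(x + 1) / 2) ^ 2) / 2 * Real.exp (ξ * x) := by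
    fun_prop
  rw [← intervalIntegral.integral_add_adjacent_intervals (b := 0)
    (hcont.intervalIntegrable _ _) (hcont.intervalIntegrable _ _)]
  have hleft : ∫ x in (-1 : ℝ)..0,
      (((x + 1) / 4) ^ 2 - max ((x - 1) / 2) (-(x + 1) / 2) ^ 2) / 2 * Real.exp (ξ * x) =
      ∫ x in (-1 : ℝ)..0, Real.exp (ξ * x) * (-3/32 * x ^ 2 + -3/16 * x + -3/32) := by
    refine intervalIntegral.integral_congr fun x hx => ?_
    rw [uIcc_of_le (by norm_num), mem_Icc] at hx
    simp only [max_eq_right (by linarith : (x - 1) / 2 ≤ -(x + 1) / 2)]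
    ring
  have hright : ∫ x in (0 : ℝ)..3,
      (((x + 1) / 4) ^ 2 - max ((x - 1) / 2) (-(x + 1) / 2) ^ 2) / 2 * Real.exp (ξ * x) =
      ∫ x in (0 : ℝ)..3, Real.exp (ξ * x) * (-3/32 * x ^ 2 + 5/16 * x + -3/32) := by
    refine intervalIntegral.integral_congr fun x hx => ?_
    rw [uIcc_of_le (by norm_num), mem_Icc] at hx
    simp only [max_eq_left (by linarith : -(x + 1) / 2 ≤ (x - 1) / 2)]
    ring
  rw [hleft, hright, integral_exp_mul_mul_quadratic _ _ _ _ _ _ hξ,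
    integral_exp_mul_mul_quadratic _ _ _ _ _ _ hξ, mul_zero, Real.exp_zero, mul_neg_one,
    mul_comm ξ 3]
  field_simp
  ring

theorem stmt4 (ξ : ℝ) (hξ : ξ ≠ 0) :
    (∫ u in convexHull ℝ {((-1 : ℝ), (0 : ℝ)), (0, -1/2), (3, 1)},
        u.2 * Real.exp (ξ * u.1)) =
      (1/(16*ξ^3)) * ((4*ξ-3)*Real.exp (3*ξ) + 8*ξ + 3*Real.exp (-ξ)) := by
  have hint : IntegrableOn (fun u : ℝ × ℝ => u.2 * Real.exp (ξ * u.1))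
      (convexHull ℝ {((-1 : ℝ), (0 : ℝ)), (0, -1/2), (3, 1)}) :=
    (by fun_prop : Continuous fun u : ℝ × ℝ => u.2 * Real.exp (ξ * u.1)).continuousOn
      |>.integrableOn_compact ((((finite_singleton _).insert _).insert _).isCompact_convexHull ℝ)
  rw [convexHull_triangle_eq] at hint ⊢
  rw [setIntegral_verticalRegion (by norm_num) (by fun_prop) (by fun_prop)
    (fun x hx => max_le (by linarith [hx.2]) (by linarith [hx.1])) hint]
  exact integral_triangle_fibers ξ hξ
end

section
/- Let Δ ⊂ ℝⁿ be a compact convex set with nonempty interior containing the origin 0 in its interior. Then there exists a unique ξ ∈ ℝⁿ such that ∫_Δ u · e^{⟨ξ,u⟩} du = 0 (as a vector-valued integral). -/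
/-!
Write `G ξ = ∫_Δ exp ⟪ξ, u⟫ du` (`expMoment (volume.restrict Δ)`). Differentiating under the
integral, `∇G ξ = ∫_Δ exp ⟪ξ, u⟫ • u du`, so the solutions are the critical points of `G`.
If `ball 0 r ⊆ Δ`, then for every `ξ` the ball of radius `r / 4` around `(r / 2) • ξ / ‖ξ‖` lies in
`Δ` and `⟪ξ, u⟫ ≥ r ‖ξ‖ / 4` on it; hence `G ξ ≥ vol (ball 0 (r / 4)) * exp (r ‖ξ‖ / 4)`, so `G` is
coercive, attains its minimum, and the minimiser is a critical point. Uniqueness: `∇G` is strictly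
monotone, as `⟪ξ₂ - ξ₁, ∇G ξ₂ - ∇G ξ₁⟫ = ∫_Δ (exp b - exp a) (b - a)` with `a = ⟪ξ₁, u⟫`,
`b = ⟪ξ₂, u⟫`, and the integrand is positive off the hyperplane `⟪ξ₂ - ξ₁, u⟫ = 0`.
-/

open MeasureTheory Metric Filter Topology
open scoped RealInnerProductSpace

noncomputable def expMoment {E : Type*} [NormedAddCommGroup E] [InnerProductSpace ℝ E]
    [MeasurableSpace E] (μ : Measure E) (ξ : E) : ℝ :=
  ∫ u, Real.exp ⟪ξ, u⟫ ∂μ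

section
variable {E : Type*} [NormedAddCommGroup E] [InnerProductSpace ℝ E]

theorem IsLocalMin.hasGradientAt_eq_zero [CompleteSpace E] {f : E → ℝ} {f' x : E}
    (h : IsLocalMin f x) (hf : HasGradientAt f f' x) : f' = 0 :=
  (InnerProductSpace.toDual ℝ E).map_eq_zero_iff.1 (h.hasFDerivAt_eq_zero hf.hasFDerivAt)

theorem exists_closedBall_subset_ball_le_inner (w : E) {r : ℝ} (hr : 0 < r) :
    ∃ c, closedBall c (r / 4) ⊆ ball 0 r ∧ ∀ u ∈ closedBall c (r / 4), r / 4 * ‖w‖ ≤ ⟪w, u⟫ := by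
  refine ⟨(r / 2 * ‖w‖⁻¹) • w, closedBall_subset_ball' ?_, fun u hu => ?_⟩
  · have : ‖w‖⁻¹ * ‖w‖ ≤ 1 := inv_mul_le_one_of_le₀ le_rfl (norm_nonneg w)
    rw [dist_zero_right, norm_smul, Real.norm_of_nonneg (by positivity), mul_assoc]
    nlinarith
  · have hcenter : ⟪w, (r / 2 * ‖w‖⁻¹) • w⟫ = r / 2 * ‖w‖ := by
      rw [real_inner_smul_right, real_inner_self_eq_norm_sq, mul_assoc, inv_mul_eq_div, sq,
        mul_self_div_self]
    have hdev : |⟪w, u - (r / 2 * ‖w‖⁻¹) • w⟫| ≤ ‖w‖ * (r / 4) :=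
      (abs_real_inner_le_norm _ _).trans
        (mul_le_mul_of_nonneg_left (mem_closedBall_iff_norm.1 hu) (norm_nonneg w))
    rw [inner_sub_right, hcenter] at hdev
    linarith [neg_abs_le (⟪w, u⟫ - r / 2 * ‖w‖)]

theorem hasFDerivAt_exp_inner_left (u x : E) :
    HasFDerivAt (fun x => Real.exp ⟪x, u⟫) (Real.exp ⟪x, u⟫ • innerSL ℝ u) x := by
  simpa only [innerSL_apply_apply, real_inner_comm u] using (innerSL ℝ u).hasFDerivAt.exp

variable [MeasurableSpace E] [BorelSpace E] (μ : Measure E) {K : Set E}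

section FiniteOnCompacts
variable [IsFiniteMeasureOnCompacts μ]

theorem integrableOn_exp_inner (hK : IsCompact K) (ξ : E) :
    IntegrableOn (fun u => Real.exp ⟪ξ, u⟫) K μ :=
  (by fun_prop : Continuous fun u : E => Real.exp ⟪ξ, u⟫).continuousOn.integrableOn_compact hK

theorem integrableOn_exp_inner_smul (hK : IsCompact K) (ξ : E) :
    IntegrableOn (fun u => Real.exp ⟪ξ, u⟫ • u) K μ :=
  (by fun_prop : Continuous fun u : E => Real.exp ⟪ξ, u⟫ • u).continuousOn.integrableOn_compact hK

variable [CompleteSpace E]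

theorem hasGradientAt_expMoment_restrict (hK : IsCompact K) (ξ : E) :
    HasGradientAt (expMoment (μ.restrict K)) (∫ u in K, Real.exp ⟪ξ, u⟫ • u ∂μ) ξ := by
  obtain ⟨M, hM⟩ := hK.isBounded.subset_closedBall 0
  have hF'_int : Integrable (fun u => Real.exp ⟪ξ, u⟫ • innerSL ℝ u) (μ.restrict K) := by
    simpa only [map_smul] using (innerSL ℝ).integrable_comp (integrableOn_exp_inner_smul μ hK ξ)
  have hgrad : InnerProductSpace.toDual ℝ E (∫ u in K, Real.exp ⟪ξ, u⟫ • u ∂μ) =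
      ∫ u in K, Real.exp ⟪ξ, u⟫ • innerSL ℝ u ∂μ := by
    simp_rw [← map_smul]
    exact ((innerSL ℝ).integral_comp_comm (integrableOn_exp_inner_smul μ hK ξ)).symm
  rw [hasGradientAt_iff_hasFDerivAt, hgrad]
  refine hasFDerivAt_integral_of_dominated_of_fderiv_le (ball_mem_nhds ξ one_pos)
    (bound := fun _ => Real.exp ((‖ξ‖ + 1) * M) * M)
    (Eventually.of_forall fun x => (integrableOn_exp_inner μ hK x).aestronglyMeasurable)
    (integrableOn_exp_inner μ hK ξ)
    hF'_int.aestronglyMeasurable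
    ?_ (integrableOn_const hK.measure_lt_top.ne)
    (Eventually.of_forall fun u x _ => hasFDerivAt_exp_inner_left u x)
  refine ae_restrict_of_forall_mem hK.measurableSet fun u hu x hx => ?_
  have hu : ‖u‖ ≤ M := mem_closedBall_zero_iff.1 (hM hu)
  have hx : ‖x‖ ≤ ‖ξ‖ + 1 := by
    linarith [norm_le_norm_add_norm_sub' x ξ, (mem_ball_iff_norm.1 hx).le]
  rw [norm_smul, innerSL_apply_norm, Real.norm_of_nonneg (Real.exp_pos _).le]
  gcongr
  exact (real_inner_le_norm x u).trans (mul_le_mul hx hu (norm_nonneg u) (by positivity))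

theorem continuous_expMoment_restrict (hK : IsCompact K) :
    Continuous (expMoment (μ.restrict K)) :=
  continuous_iff_continuousAt.2 fun ξ =>
    (hasGradientAt_expMoment_restrict μ hK ξ).hasFDerivAt.continuousAt

end FiniteOnCompacts

variable [FiniteDimensional ℝ E] [μ.IsAddHaarMeasure]

theorem measureReal_closedBall_mul_exp_le_expMoment_restrict (hK : IsCompact K) {r : ℝ}
    (hr : 0 < r) (hball : ball 0 r ⊆ K) (ξ : E) :
    μ.real (closedBall 0 (r / 4)) * Real.exp (r / 4 * ‖ξ‖) ≤ expMoment (μ.restrict K) ξ := by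
  obtain ⟨c, hcK, hc⟩ := exists_closedBall_subset_ball_le_inner ξ hr
  have hint := integrableOn_exp_inner μ hK ξ
  calc μ.real (closedBall 0 (r / 4)) * Real.exp (r / 4 * ‖ξ‖)
      = ∫ _ in closedBall c (r / 4), Real.exp (r / 4 * ‖ξ‖) ∂μ := by
        rw [setIntegral_const, measureReal_def, measureReal_def,
          Measure.addHaar_closedBall_center μ c, smul_eq_mul]
    _ ≤ ∫ u in closedBall c (r / 4), Real.exp ⟪ξ, u⟫ ∂μ :=
        setIntegral_mono_on (integrableOn_const measure_closedBall_lt_top.ne)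
          (hint.mono_set (hcK.trans hball)) measurableSet_closedBall
          fun u hu => Real.exp_le_exp.2 (hc u hu)
    _ ≤ ∫ u in K, Real.exp ⟪ξ, u⟫ ∂μ :=
        setIntegral_mono_set hint (Eventually.of_forall fun u => (Real.exp_pos _).le)
          (hcK.trans hball).eventuallyLE

theorem tendsto_expMoment_restrict_cocompact (hK : IsCompact K) {r : ℝ} (hr : 0 < r)
    (hball : ball 0 r ⊆ K) : Tendsto (expMoment (μ.restrict K)) (cocompact E) atTop := by
  have hvol : 0 < μ.real (closedBall 0 (r / 4)) :=
    ENNReal.toReal_pos (measure_closedBall_pos μ 0 (by positivity)).ne'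
      measure_closedBall_lt_top.ne
  refine tendsto_atTop_mono
    (measureReal_closedBall_mul_exp_le_expMoment_restrict μ hK hr hball) ?_
  exact (Real.tendsto_exp_atTop.comp
    (tendsto_norm_cocompact_atTop.const_mul_atTop (by positivity))).const_mul_atTop hvol

theorem exp_sub_exp_mul_sub_pos {a b : ℝ} (h : a ≠ b) :
    0 < (Real.exp b - Real.exp a) * (b - a) := by
  rcases h.lt_or_gt with h | h
  · exact mul_pos (sub_pos.2 (Real.exp_lt_exp.2 h)) (sub_pos.2 h)
  · exact mul_pos_of_neg_of_neg (sub_neg.2 (Real.exp_lt_exp.2 h)) (sub_neg.2 h)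

theorem inner_sub_integral_exp_inner_smul_pos (hK : IsCompact K) (hμK : μ K ≠ 0) {ξ₁ ξ₂ : E}
    (hne : ξ₁ ≠ ξ₂) :
    0 < ⟪ξ₂ - ξ₁, (∫ u in K, Real.exp ⟪ξ₂, u⟫ • u ∂μ) - ∫ u in K, Real.exp ⟪ξ₁, u⟫ • u ∂μ⟫ := by
  set g : E → ℝ := fun u => (Real.exp ⟪ξ₂, u⟫ - Real.exp ⟪ξ₁, u⟫) * (⟪ξ₂, u⟫ - ⟪ξ₁, u⟫)
  have hint := integrableOn_exp_inner_smul μ hK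
  have hg : ⟪ξ₂ - ξ₁, (∫ u in K, Real.exp ⟪ξ₂, u⟫ • u ∂μ) - ∫ u in K, Real.exp ⟪ξ₁, u⟫ • u ∂μ⟫ =
      ∫ u in K, g u ∂μ := by
    have hsub : IntegrableOn (fun u => Real.exp ⟪ξ₂, u⟫ • u - Real.exp ⟪ξ₁, u⟫ • u) K μ :=
      (hint ξ₂).sub (hint ξ₁)
    rw [← integral_sub (hint ξ₂) (hint ξ₁), ← integral_inner hsub]
    congr 1 with u
    simp only [g, inner_sub_left, inner_sub_right, real_inner_smul_right, real_inner_comm u]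
    ring
  have hg_nonneg : ∀ u, 0 ≤ g u := fun u => by
    by_cases h : ⟪ξ₁, u⟫ = ⟪ξ₂, u⟫
    · simp [g, h]
    · exact (exp_sub_exp_mul_sub_pos h).le
  have hH : μ (ℝ ∙ (ξ₂ - ξ₁))ᗮ = 0 := by
    refine Measure.addHaar_submodule μ _ ?_
    rw [Ne, Submodule.orthogonal_eq_top_iff, Submodule.span_singleton_eq_bot, sub_eq_zero]
    exact hne.symm
  rw [hg, setIntegral_pos_iff_support_of_nonneg_ae (Eventually.of_forall hg_nonneg)
    ((by fun_prop : Continuous g).continuousOn.integrableOn_compact hK)]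
  refine (pos_iff_ne_zero.2 hμK).trans_le ?_
  calc μ K = μ (K \ (ℝ ∙ (ξ₂ - ξ₁))ᗮ) := (measure_sdiff_null hH).symm
    _ ≤ μ (Function.support g ∩ K) := measure_mono fun u ⟨huK, huH⟩ => by
      rw [SetLike.mem_coe, Submodule.mem_orthogonal_singleton_iff_inner_right, inner_sub_left,
        sub_eq_zero] at huH
      exact ⟨(exp_sub_exp_mul_sub_pos (Ne.symm huH)).ne', huK⟩

theorem injective_integral_exp_inner_smul (hK : IsCompact K) (hμK : μ K ≠ 0) :
    Function.Injective fun ξ => ∫ u in K, Real.exp ⟪ξ, u⟫ • u ∂μ := by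
  intro ξ₁ ξ₂ h
  by_contra hne
  refine (inner_sub_integral_exp_inner_smul_pos μ hK hμK hne).ne' ?_
  simp only at h
  rw [h, sub_self, inner_zero_right]

end

theorem stmt8_general (n : ℕ) (Δ : Set (EuclideanSpace ℝ (Fin n))) (hc : IsCompact Δ)
    (h0 : (0 : EuclideanSpace ℝ (Fin n)) ∈ interior Δ) :
    ∃! ξ : EuclideanSpace ℝ (Fin n),
      (∫ u in Δ, Real.exp ⟪ξ, u⟫ • u) = 0 := by
  obtain ⟨r, hr, hball⟩ := Metric.mem_nhds_iff.1 (mem_interior_iff_mem_nhds.1 h0)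
  obtain ⟨ξ, hmin⟩ := (continuous_expMoment_restrict volume hc).exists_forall_le
    (tendsto_expMoment_restrict_cocompact volume hc hr hball)
  have hcrit : (∫ u in Δ, Real.exp ⟪ξ, u⟫ • u) = 0 :=
    IsLocalMin.hasGradientAt_eq_zero (Eventually.of_forall hmin)
      (hasGradientAt_expMoment_restrict volume hc ξ)
  exact ⟨ξ, hcrit, fun η hη => injective_integral_exp_inner_smul volume hc
    (Measure.measure_pos_of_nonempty_interior volume ⟨0, h0⟩).ne' (hη.trans hcrit.symm)⟩

theorem stmt8 (n : ℕ) (Δ : Set (EuclideanSpace ℝ (Fin n))) (hc : IsCompact Δ)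
    (hconv : Convex ℝ Δ) (hint : (interior Δ).Nonempty)
    (h0 : (0 : EuclideanSpace ℝ (Fin n)) ∈ interior Δ) :
    ∃! ξ : EuclideanSpace ℝ (Fin n),
      (∫ u in Δ, Real.exp ⟪ξ, u⟫ • u) = 0 :=
  stmt8_general n Δ hc h0
end

section
/- Let Δ₀ ⊂ ℝ³ be the polytope conv((−3,0,1),(−2,1,1),(2,1,−1),(3,0,−2),(0,−3,1),(0,1,1)). For every real ξ ≠ 0, ∫_{Δ₀} u₂ · e^{ξ u₂} du = (1/ξ⁴) · ((2ξ³ − 3ξ − 3)e^{4ξ} + 12ξ e^{3ξ} + 3ξ + 3) · e^{−3ξ}, where u = (u₁,u₂,u₃) and integration is with respect to Lebesgue measure on ℝ³. -/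
/-!
Δ₀ is cut out by five half-spaces. Writing u = (x, y, z), its slice at height y ≤ 1 is the
triangle `z ≤ 1, x + z ≤ 1, x + 2z ≥ |y| - 1`, of area `max (3 - |y|) 0 ^ 2 / 2`; the slices with
y > 1 are empty. By Fubini the integral is therefore `∫_{-3}^{1} y e^{ξy} (3 - |y|)² / 2 dy`, and on
each of `[-3, 0]` and `[0, 1]` the integrand is `e^{ξy}` times a cubic, which has an explicit
primitive.
-/

open MeasureTheory Set

theorem integral_fin_three_eq_iterated {E : Type*} [NormedAddCommGroup E] [NormedSpace ℝ E]
    {f : (Fin 3 → ℝ) → E} (hf : Integrable f) :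
    ∫ u, f u = ∫ y, ∫ z, ∫ x, f ![x, y, z] := by
  let e : (Fin 3 → ℝ) ≃ᵐ ℝ × ℝ × ℝ :=
    (MeasurableEquiv.piFinSuccAbove (fun _ => ℝ) 1).trans
      ((MeasurableEquiv.refl ℝ).prodCongr
        (MeasurableEquiv.finTwoArrow.trans MeasurableEquiv.prodComm))
  have he : MeasurePreserving e := by
    have hswap : MeasurePreserving (MeasurableEquiv.finTwoArrow.trans MeasurableEquiv.prodComm)
        (volume : Measure (Fin 2 → ℝ)) (volume.prod volume) :=
      Measure.measurePreserving_swap.comp (volume_preserving_finTwoArrow ℝ)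
    exact ((MeasurePreserving.id volume).prod hswap).comp
      (volume_preserving_piFinSuccAbove (fun _ => ℝ) 1)
  have he_symm (y z x : ℝ) : e.symm (y, z, x) = ![x, y, z] := by
    funext i; fin_cases i <;> rfl
  have hg : Integrable (fun p : ℝ × ℝ × ℝ => f (e.symm p)) (volume.prod volume) :=
    ((he.symm e).integrable_comp_emb e.symm.measurableEmbedding).mpr hf
  rw [← (he.symm e).integral_comp' (g := f), Measure.volume_eq_prod, integral_prod _ hg]
  refine integral_congr_ae ?_
  filter_upwards [hg.prod_right_ae] with y hy
  rw [Measure.volume_eq_prod, integral_prod _ hy]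
  simp only [he_symm]

theorem setIntegral_Iic_max_sub_zero (a b : ℝ) :
    ∫ z in Iic b, max (z - a) 0 = max (b - a) 0 ^ 2 / 2 := by
  have hramp : (fun z => max (z - a) 0) = (Ici a).indicator (fun z => z - a) := by
    funext z
    by_cases hz : z ∈ Ici a
    · rw [indicator_of_mem hz, max_eq_left (sub_nonneg.2 hz)]
    · rw [indicator_of_notMem hz, max_eq_right (by simp only [mem_Ici, not_le] at hz; linarith)]
  rw [hramp, setIntegral_indicator measurableSet_Ici, Iic_inter_Ici]
  rcases le_or_gt a b with hab | hab
  · rw [integral_Icc_eq_integral_Ioc, ← intervalIntegral.integral_of_le hab,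
      intervalIntegral.integral_sub intervalIntegral.intervalIntegrable_id intervalIntegrable_const,
      integral_id, intervalIntegral.integral_const, max_eq_left (sub_nonneg.2 hab), smul_eq_mul]
    ring
  · rw [Icc_eq_empty hab.not_ge, setIntegral_empty, max_eq_right (by linarith)]
    norm_num

theorem hasDerivAt_cubic (a b c d t : ℝ) :
    HasDerivAt (fun t => a * t ^ 3 + b * t ^ 2 + c * t + d) (3 * a * t ^ 2 + 2 * b * t + c) t := by
  refine (((((hasDerivAt_pow 3 t).const_mul a).add ((hasDerivAt_pow 2 t).const_mul b)).add
    ((hasDerivAt_id t).const_mul c)).add_const d).congr_deriv ?_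
  norm_num
  ring

/-- `e^{ξt} (p/ξ - p'/ξ² + p''/ξ³ - p'''/ξ⁴)` for the cubic `p = a t³ + b t² + c t + d`. -/
noncomputable def expCubicPrimitive (ξ a b c d t : ℝ) : ℝ :=
  Real.exp (ξ * t) * (a / ξ * t ^ 3 + (b / ξ - 3 * a / ξ ^ 2) * t ^ 2
    + (c / ξ - 2 * b / ξ ^ 2 + 6 * a / ξ ^ 3) * t
    + (d / ξ - c / ξ ^ 2 + 2 * b / ξ ^ 3 - 6 * a / ξ ^ 4))

theorem hasDerivAt_expCubicPrimitive {ξ : ℝ} (hξ : ξ ≠ 0) (a b c d t : ℝ) :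
    HasDerivAt (expCubicPrimitive ξ a b c d)
      (Real.exp (ξ * t) * (a * t ^ 3 + b * t ^ 2 + c * t + d)) t := by
  have hexp : HasDerivAt (fun t => Real.exp (ξ * t)) (Real.exp (ξ * t) * ξ) t :=
    ((hasDerivAt_id t).const_mul ξ).exp.congr_deriv (by simp)
  refine (hexp.mul (hasDerivAt_cubic _ _ _ _ t)).congr_deriv ?_
  field_simp
  ring

theorem integral_exp_mul_cubic {ξ : ℝ} (hξ : ξ ≠ 0) (a b c d s t : ℝ) :
    ∫ x in s..t, Real.exp (ξ * x) * (a * x ^ 3 + b * x ^ 2 + c * x + d) =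
      expCubicPrimitive ξ a b c d t - expCubicPrimitive ξ a b c d s :=
  intervalIntegral.integral_eq_sub_of_hasDerivAt
    (fun x _ => hasDerivAt_expCubicPrimitive hξ a b c d x)
    (Continuous.intervalIntegrable (by fun_prop) _ _)

def Δ₀ : Set (Fin 3 → ℝ) :=
  {u | u 1 ≤ 1 ∧ u 2 ≤ 1 ∧ u 0 + u 2 ≤ 1 ∧ -1 - u 1 ≤ u 0 + 2 * u 2 ∧ u 1 - 1 ≤ u 0 + 2 * u 2}

theorem convex_Δ₀ : Convex ℝ Δ₀ := by
  rintro u ⟨hu₁, hu₂, hu₃, hu₄, hu₅⟩ v ⟨hv₁, hv₂, hv₃, hv₄, hv₅⟩ a b ha hb hab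
  simp only [Δ₀, mem_ofPred_eq, Pi.add_apply, Pi.smul_apply, smul_eq_mul]
  refine ⟨?_, ?_, ?_, ?_, ?_⟩ <;> nlinarith

theorem convexHull_eq_Δ₀ :
    convexHull ℝ
      ({![(-3:ℝ),0,1], ![-2,1,1], ![2,1,-1], ![3,0,-2], ![0,-3,1], ![0,1,1]} :
        Set (Fin 3 → ℝ)) = Δ₀ := by
  refine subset_antisymm (convexHull_min ?_ convex_Δ₀) ?_
  · rintro u (rfl | rfl | rfl | rfl | rfl | rfl) <;> simp [Δ₀] <;> norm_num
  set S := ({![(-3:ℝ),0,1], ![-2,1,1], ![2,1,-1], ![3,0,-2], ![0,-3,1], ![0,1,1]} :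
    Set (Fin 3 → ℝ))
  set V : Fin 6 → Fin 3 → ℝ :=
    ![![(-3:ℝ),0,1], ![-2,1,1], ![2,1,-1], ![3,0,-2], ![0,-3,1], ![0,1,1]]
  have hV (i : Fin 6) : V i ∈ S := by fin_cases i <;> simp [V, S]
  rintro u ⟨h₁, h₂, h₃, h₄, h₅⟩
  set x := u 0; set y := u 1; set z := u 2
  have hcomb (w : Fin 6 → ℝ) (hw₀ : ∀ i, 0 ≤ w i) (hw₁ : ∑ i, w i = 1)
      (hu : ![x, y, z] = ∑ i, w i • V i) : u ∈ convexHull ℝ S := by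
    convert (convex_convexHull ℝ S).sum_mem (fun i _ => hw₀ i) hw₁
      (fun i _ => subset_convexHull ℝ S (hV i))
    rw [← hu]; funext j; fin_cases j <;> rfl
  -- The planes `2x + y + 4z = 1` and `x + y + 3z = 0` cut Δ₀ into three tetrahedra;
  -- the weights are barycentric coordinates in the tetrahedron containing `u`.
  rcases le_or_gt 1 (2*x + y + 4*z) with hc | hc
  · refine hcomb ![0, (1-x-z)/2, (1-z)/2, 0, (1-y)/4, (2*x+y+4*z-1)/4]
      (by intro i; fin_cases i <;> simp <;> linarith) (by simp [Fin.sum_univ_six]; ring) ?_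
    funext j; fin_cases j <;> simp [Fin.sum_univ_six, V] <;> ring
  rcases le_or_gt 0 (x + y + 3*z) with hd | hd
  · refine hcomb ![(1-2*x-y-4*z)/3, (x+y+3*z)/2, (1-z)/2, 0, (x-y+2*z+1)/6, 0]
      (by intro i; fin_cases i <;> simp <;> linarith) (by simp [Fin.sum_univ_six]; ring) ?_
    funext j; fin_cases j <;> simp [Fin.sum_univ_six, V] <;> ring
  · refine hcomb ![(1-x-z)/3, 0, (x+y+2*z+1)/2, -(x+y+3*z)/3, (x-y+2*z+1)/6, 0]
      (by intro i; fin_cases i <;> simp <;> linarith) (by simp [Fin.sum_univ_six]; ring) ?_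
    funext j; fin_cases j <;> simp [Fin.sum_univ_six, V] <;> ring

theorem vec_mem_Δ₀_iff (x y z : ℝ) :
    ![x, y, z] ∈ Δ₀ ↔ y ≤ 1 ∧ z ≤ 1 ∧ x ∈ Icc (|y| - 1 - 2 * z) (1 - z) := by
  simp only [Δ₀, mem_ofPred_eq, mem_Icc, Matrix.cons_val_zero, Matrix.cons_val_one,
    Matrix.cons_val_two, Matrix.head_cons, Matrix.tail_cons, sub_le_iff_le_add, abs_le]
  constructor
  · rintro ⟨h₁, h₂, h₃, h₄, h₅⟩; exact ⟨h₁, h₂, ⟨by linarith, by linarith⟩, by linarith⟩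
  · rintro ⟨h₁, h₂, ⟨h₃, h₄⟩, h₅⟩; exact ⟨h₁, h₂, by linarith, by linarith, by linarith⟩

theorem integral_integral_indicator_Δ₀ (φ : ℝ → ℝ) (y : ℝ) :
    ∫ z, ∫ x, Δ₀.indicator (fun u => φ (u 1)) ![x, y, z] =
      (Iic 1).indicator (fun y => φ y * (max (3 - |y|) 0 ^ 2 / 2)) y := by
  by_cases hy : y ≤ 1
  · have hx (z : ℝ) : ∫ x, Δ₀.indicator (fun u => φ (u 1)) ![x, y, z] =
        (Iic 1).indicator (fun z => φ y * max (z - (|y| - 2)) 0) z := by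
      by_cases hz : z ≤ 1
      · have hslice : (fun x => Δ₀.indicator (fun u => φ (u 1)) ![x, y, z]) =
            (Icc (|y| - 1 - 2 * z) (1 - z)).indicator (fun _ => φ y) := by
          ext x; simp [indicator, vec_mem_Δ₀_iff, hy, hz]
        rw [hslice, integral_indicator_const _ measurableSet_Icc, Real.volume_real_Icc,
          indicator_of_mem (mem_Iic.2 hz), smul_eq_mul, mul_comm]
        ring_nf
      · simp [vec_mem_Δ₀_iff, hz]
    simp_rw [hx, integral_indicator measurableSet_Iic, integral_const_mul,
      setIntegral_Iic_max_sub_zero, indicator_of_mem (mem_Iic.2 hy)]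
    ring_nf
  · simp [vec_mem_Δ₀_iff, hy]

theorem setIntegral_Iic_one_mul_exp_mul_sq_three_sub_abs {ξ : ℝ} (hξ : ξ ≠ 0) :
    ∫ y in Iic 1, y * Real.exp (ξ * y) * (max (3 - |y|) 0 ^ 2 / 2) =
      (1/ξ^4) * ((2*ξ^3 - 3*ξ - 3)*Real.exp (4*ξ) + 12*ξ*Real.exp (3*ξ) + 3*ξ + 3)
        * Real.exp (-3*ξ) := by
  set f := fun y => y * Real.exp (ξ * y) * (max (3 - |y|) 0 ^ 2 / 2)
  have hf : Continuous f := by fun_prop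
  have hsupp : ∫ y in Iic 1, f y = ∫ y in (-3)..1, f y := by
    rw [intervalIntegral.integral_of_le (by norm_num)]
    refine setIntegral_eq_of_subset_of_forall_sdiff_eq_zero measurableSet_Iic
      Ioc_subset_Iic_self ?_
    rintro y ⟨hy₁, hy₂⟩
    have : y ≤ -3 := by by_contra! h; exact hy₂ ⟨h, hy₁⟩
    simp only [f, abs_of_neg (by linarith : y < 0), max_eq_right (by linarith : 3 - -y ≤ 0)]
    ring
  have hneg : ∫ y in (-3)..0, f y =
      ∫ y in (-3)..0, Real.exp (ξ * y) * (1/2 * y ^ 3 + 3 * y ^ 2 + 9/2 * y + 0) := by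
    refine intervalIntegral.integral_congr fun y hy => ?_
    rw [uIcc_of_le (by norm_num)] at hy
    simp only [f, abs_of_nonpos hy.2, max_eq_left (by linarith [hy.1] : (0:ℝ) ≤ 3 - -y)]
    ring
  have hpos : ∫ y in (0:ℝ)..1, f y =
      ∫ y in (0:ℝ)..1, Real.exp (ξ * y) * (1/2 * y ^ 3 + -3 * y ^ 2 + 9/2 * y + 0) := by
    refine intervalIntegral.integral_congr fun y hy => ?_
    rw [uIcc_of_le (by norm_num)] at hy
    simp only [f, abs_of_nonneg hy.1, max_eq_left (by linarith [hy.2] : (0:ℝ) ≤ 3 - y)]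
    ring
  rw [hsupp, ← intervalIntegral.integral_add_adjacent_intervals (b := 0)
      (hf.intervalIntegrable _ _) (hf.intervalIntegrable _ _), hneg, hpos,
    integral_exp_mul_cubic hξ, integral_exp_mul_cubic hξ]
  have h4 : Real.exp (4 * ξ) = Real.exp ξ * Real.exp (3 * ξ) := by
    rw [← Real.exp_add]; ring_nf
  have h3 : Real.exp (ξ * -3) = (Real.exp (3 * ξ))⁻¹ := by
    rw [← Real.exp_neg]; ring_nf
  have h3' : Real.exp (-3 * ξ) = (Real.exp (3 * ξ))⁻¹ := by
    rw [← Real.exp_neg]; ring_nf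
  simp only [expCubicPrimitive, mul_zero, Real.exp_zero, mul_one, h3, h3', h4]
  field_simp
  ring

theorem stmt12 (ξ : ℝ) (hξ : ξ ≠ 0) :
    (∫ u in convexHull ℝ
        ({![(-3:ℝ),0,1], ![-2,1,1], ![2,1,-1], ![3,0,-2], ![0,-3,1], ![0,1,1]} :
          Set (Fin 3 → ℝ)),
        u 1 * Real.exp (ξ * u 1)) =
      (1/ξ^4) * ((2*ξ^3 - 3*ξ - 3)*Real.exp (4*ξ) + 12*ξ*Real.exp (3*ξ) + 3*ξ + 3)
        * Real.exp (-3*ξ) := by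
  have hK := (toFinite
    ({![(-3:ℝ),0,1], ![-2,1,1], ![2,1,-1], ![3,0,-2], ![0,-3,1], ![0,1,1]} :
      Set (Fin 3 → ℝ))).isCompact_convexHull (𝕜 := ℝ)
  rw [convexHull_eq_Δ₀] at hK ⊢
  have hint : Integrable (Δ₀.indicator fun u => u 1 * Real.exp (ξ * u 1)) :=
    ((by fun_prop : Continuous fun u : Fin 3 → ℝ => u 1 * Real.exp (ξ * u 1)).continuousOn
      |>.integrableOn_compact hK).integrable_indicator hK.measurableSet
  rw [← integral_indicator hK.measurableSet, integral_fin_three_eq_iterated hint]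
  simp_rw [integral_integral_indicator_Δ₀ (fun t => t * Real.exp (ξ * t))]
  rw [integral_indicator measurableSet_Iic]
  exact setIntegral_Iic_one_mul_exp_mul_sq_three_sub_abs hξ
end

section
/- Let B ⊂ ℝ² be the pentagon conv((−3,0),(−2,1),(2,1),(3,0),(0,−3)). Then ∫_B ( 2 + min(0,−x) + min(0,y) + (x − y − 1)/2 ) dx dy = 23/3. -/
/-!
The pentagon is the region between the graphs of the convex function `|x| - 3` and the concave
function `min 1 (3 - |x|)` over `[-3, 3]`, so Fubini reduces the integral to iterated
one-dimensional ones. The integrand is linear in `y` on either side of `y = 0`, so each vertical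
slice integrates to a quadratic in `x` on each of the intervals cut out by the breakpoints
`-2, 0, 2` of the boundary and of `min 0 (-x)`.
-/

open MeasureTheory Set

theorem convex_setOf_mem_Icc {𝕜 E β : Type*} [Semiring 𝕜] [PartialOrder 𝕜] [AddCommMonoid E]
    [AddCommMonoid β] [PartialOrder β] [IsOrderedAddMonoid β] [SMul 𝕜 E] [Module 𝕜 β]
    [PosSMulMono 𝕜 β] {s : Set E} {lo hi : E → β}
    (hlo : ConvexOn 𝕜 s lo) (hhi : ConcaveOn 𝕜 s hi) :
    Convex 𝕜 {p : E × β | p.1 ∈ s ∧ p.2 ∈ Icc (lo p.1) (hi p.1)} := by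
  convert hlo.convex_epigraph.inter hhi.convex_hypograph using 1
  ext p
  simp only [mem_ofPred_eq, mem_Icc, mem_inter_iff]
  tauto

theorem mk_mem_segment_of_collinear {x₁ x₂ y₁ y₂ x y : ℝ} (h : x₁ < x₂) (h₁ : x₁ ≤ x)
    (h₂ : x ≤ x₂) (hy : (x₂ - x₁) * y = (x₂ - x) * y₁ + (x - x₁) * y₂) :
    (x, y) ∈ segment ℝ (x₁, y₁) (x₂, y₂) := by
  have hx : 0 < x₂ - x₁ := by linarith
  refine ⟨(x₂ - x) / (x₂ - x₁), (x - x₁) / (x₂ - x₁), by bound, by bound,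
    by field_simp; ring, ?_⟩
  ext <;> simp only [Prod.smul_mk, smul_eq_mul, Prod.mk_add_mk] <;> field_simp <;> linarith

theorem setIntegral_eq_integral_setIntegral_Icc {α E : Type*} [MeasurableSpace α]
    [NormedAddCommGroup E] [NormedSpace ℝ E] {μ : Measure α} {ν : Measure ℝ} [SFinite μ]
    [SFinite ν] {s : Set α} {lo hi : α → ℝ} {f : α × ℝ → E} (hs : MeasurableSet s)
    (hlo : Measurable lo) (hhi : Measurable hi)
    (hf : IntegrableOn f {p | p.1 ∈ s ∧ p.2 ∈ Icc (lo p.1) (hi p.1)} (μ.prod ν)) :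
    ∫ p in {p | p.1 ∈ s ∧ p.2 ∈ Icc (lo p.1) (hi p.1)}, f p ∂(μ.prod ν) =
      ∫ x in s, ∫ y in Icc (lo x) (hi x), f (x, y) ∂ν ∂μ := by
  have hS : MeasurableSet {p : α × ℝ | p.1 ∈ s ∧ p.2 ∈ Icc (lo p.1) (hi p.1)} :=
    measurable_fst hs |>.inter <|
      (measurableSet_le (hlo.comp measurable_fst) measurable_snd).inter
      (measurableSet_le measurable_snd (hhi.comp measurable_fst))
  rw [← integral_indicator hS, integral_prod _ ((integrable_indicator_iff hS).2 hf),
    ← integral_indicator hs]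
  congr 1 with x
  by_cases hx : x ∈ s
  · rw [indicator_of_mem hx, ← integral_indicator measurableSet_Icc]
    congr 1 with y
    simp [indicator, hx]
  · simp [indicator, hx]

theorem integral_eq_of_eqOn_quadratic {g : ℝ → ℝ} {a b : ℝ} (A B C : ℝ) (hab : a ≤ b)
    (hg : ∀ x ∈ Icc a b, g x = A + B * x + C * x ^ 2) :
    ∫ x in a..b, g x =
      (A * b + B * b ^ 2 / 2 + C * b ^ 3 / 3) - (A * a + B * a ^ 2 / 2 + C * a ^ 3 / 3) := by
  rw [intervalIntegral.integral_congr (g := fun x => A + B * x + C * x ^ 2)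
    (by rwa [uIcc_of_le hab])]
  refine intervalIntegral.integral_eq_sub_of_hasDerivAt
    (f := fun x => A * x + B * x ^ 2 / 2 + C * x ^ 3 / 3) (fun x _ => ?_)
    ((by fun_prop : Continuous fun x : ℝ => A + B * x + C * x ^ 2).intervalIntegrable _ _)
  convert ((hasDerivAt_id x).const_mul A |>.add (((hasDerivAt_pow 2 x).const_mul B).div_const 2)
    |>.add (((hasDerivAt_pow 3 x).const_mul C).div_const 3)) using 1
  · rfl
  · norm_num; ring

def pentagonLower (x : ℝ) : ℝ := |x| - 3

def pentagonUpper (x : ℝ) : ℝ := min 1 (3 - |x|)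

theorem pentagonLower_nonpos {x : ℝ} (hx : x ∈ Icc (-3 : ℝ) 3) : pentagonLower x ≤ 0 :=
  sub_nonpos.2 (abs_le.2 hx)

theorem pentagonUpper_nonneg {x : ℝ} (hx : x ∈ Icc (-3 : ℝ) 3) : 0 ≤ pentagonUpper x :=
  le_min zero_le_one (sub_nonneg.2 (abs_le.2 hx))

theorem convexHull_pentagon :
    convexHull ℝ {((-3 : ℝ), (0 : ℝ)), (-2, 1), (2, 1), (3, 0), (0, -3)} =
      {p : ℝ × ℝ | p.1 ∈ Icc (-3) 3 ∧ p.2 ∈ Icc (pentagonLower p.1) (pentagonUpper p.1)} := by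
  set V : Set (ℝ × ℝ) := {((-3 : ℝ), (0 : ℝ)), (-2, 1), (2, 1), (3, 0), (0, -3)} with hV
  refine Subset.antisymm (convexHull_min ?_ (convex_setOf_mem_Icc ?_ ?_)) ?_
  · simp [hV, insert_subset_iff, pentagonLower, pentagonUpper]
    norm_num
  · exact (convexOn_norm (convex_Icc _ _)).sub (concaveOn_const 3 (convex_Icc _ _))
  · exact (concaveOn_const 1 (convex_Icc _ _)).inf
      ((concaveOn_const 3 (convex_Icc _ _)).sub (convexOn_norm (convex_Icc _ _)))
  rintro ⟨x, y⟩ ⟨⟨hx₁, hx₂⟩, hlo, hhi⟩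
  have lower : (x, pentagonLower x) ∈ convexHull ℝ V := by
    rcases le_total x 0 with hx | hx
    · refine segment_subset_convexHull (by simp [hV]) (by simp [hV]) <|
        mk_mem_segment_of_collinear (x₁ := -3) (y₁ := 0) (x₂ := 0) (y₂ := -3)
          (by norm_num) hx₁ hx ?_
      rw [pentagonLower, abs_of_nonpos hx]; ring
    · refine segment_subset_convexHull (by simp [hV]) (by simp [hV]) <|
        mk_mem_segment_of_collinear (x₁ := 0) (y₁ := -3) (x₂ := 3) (y₂ := 0)
          (by norm_num) hx hx₂ ?_
      rw [pentagonLower, abs_of_nonneg hx]; ring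
  have upper : (x, pentagonUpper x) ∈ convexHull ℝ V := by
    rcases le_total x (-2) with hx | hx
    · refine segment_subset_convexHull (by simp [hV]) (by simp [hV]) <|
        mk_mem_segment_of_collinear (x₁ := -3) (y₁ := 0) (x₂ := -2) (y₂ := 1)
          (by norm_num) hx₁ hx ?_
      rw [pentagonUpper, abs_of_nonpos (by linarith), min_eq_right (by linarith)]; ring
    rcases le_total x 2 with hx' | hx'
    · refine segment_subset_convexHull (by simp [hV]) (by simp [hV]) <|
        mk_mem_segment_of_collinear (x₁ := -2) (y₁ := 1) (x₂ := 2) (y₂ := 1)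
          (by norm_num) hx hx' ?_
      rw [pentagonUpper, min_eq_left (by linarith [abs_le.2 ⟨hx, hx'⟩])]; ring
    · refine segment_subset_convexHull (by simp [hV]) (by simp [hV]) <|
        mk_mem_segment_of_collinear (x₁ := 2) (y₁ := 1) (x₂ := 3) (y₂ := 0)
          (by norm_num) hx' hx₂ ?_
      rw [pentagonUpper, abs_of_nonneg (by linarith), min_eq_right (by linarith)]; ring
  refine (convex_convexHull ℝ V).segment_subset lower upper ?_
  rw [← Prod.image_mk_segment_right, segment_eq_Icc (hlo.trans hhi)]
  exact mem_image_of_mem _ ⟨hlo, hhi⟩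

theorem isCompact_pentagon : IsCompact
    {p : ℝ × ℝ | p.1 ∈ Icc (-3) 3 ∧ p.2 ∈ Icc (pentagonLower p.1) (pentagonUpper p.1)} :=
  convexHull_pentagon ▸ (toFinite _).isCompact_convexHull ℝ

theorem integral_vertical_slice (x : ℝ) {a b : ℝ} (ha : a ≤ 0) (hb : 0 ≤ b) :
    ∫ y in Icc a b, (2 + min 0 (-x) + min 0 y + (x - y - 1) / 2) =
      (2 + min 0 (-x) + (x - 1) / 2) * (b - a) - (a ^ 2 + b ^ 2) / 4 := by
  have hc : Continuous fun y : ℝ => 2 + min 0 (-x) + min 0 y + (x - y - 1) / 2 := by fun_prop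
  rw [integral_Icc_eq_integral_Ioc, ← intervalIntegral.integral_of_le (ha.trans hb),
    ← intervalIntegral.integral_add_adjacent_intervals (hc.intervalIntegrable a 0)
      (hc.intervalIntegrable 0 b),
    integral_eq_of_eqOn_quadratic (2 + min 0 (-x) + (x - 1) / 2) (1 / 2) 0 ha
      fun y hy => by rw [min_eq_right hy.2]; ring,
    integral_eq_of_eqOn_quadratic (2 + min 0 (-x) + (x - 1) / 2) (-1 / 2) 0 hb
      fun y hy => by rw [min_eq_left hy.1]; ring]
  ring

theorem integral_pentagon_profile :
    ∫ x in Icc (-3 : ℝ) 3, ((2 + min 0 (-x) + (x - 1) / 2) * (pentagonUpper x - pentagonLower x) -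
      (pentagonLower x ^ 2 + pentagonUpper x ^ 2) / 4) = 23 / 3 := by
  have hc : Continuous fun x => (2 + min 0 (-x) + (x - 1) / 2) *
      (pentagonUpper x - pentagonLower x) - (pentagonLower x ^ 2 + pentagonUpper x ^ 2) / 4 := by
    unfold pentagonLower pentagonUpper; fun_prop
  rw [integral_Icc_eq_integral_Ioc, ← intervalIntegral.integral_of_le (by norm_num),
    ← intervalIntegral.integral_add_adjacent_intervals (hc.intervalIntegrable (-3) (-2))
      (hc.intervalIntegrable (-2) 3),
    ← intervalIntegral.integral_add_adjacent_intervals (hc.intervalIntegrable (-2) 0)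
      (hc.intervalIntegrable 0 3),
    ← intervalIntegral.integral_add_adjacent_intervals (hc.intervalIntegrable 0 2)
      (hc.intervalIntegrable 2 3),
    integral_eq_of_eqOn_quadratic (9 / 2) 3 (1 / 2) (by norm_num) fun x ⟨h₁, h₂⟩ => by
      rw [pentagonLower, pentagonUpper, abs_of_nonpos (by linarith), min_eq_left (by linarith),
        min_eq_right (by linarith)]; ring,
    integral_eq_of_eqOn_quadratic (7 / 2) 2 (1 / 4) (by norm_num) fun x ⟨h₁, h₂⟩ => by
      rw [pentagonLower, pentagonUpper, abs_of_nonpos h₂, min_eq_left (by linarith),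
        min_eq_left (by linarith)]; ring,
    integral_eq_of_eqOn_quadratic (7 / 2) (-2) (1 / 4) (by norm_num) fun x ⟨h₁, h₂⟩ => by
      rw [pentagonLower, pentagonUpper, abs_of_nonneg h₁, min_eq_right (by linarith),
        min_eq_left (by linarith)]; ring,
    integral_eq_of_eqOn_quadratic (9 / 2) (-3) (1 / 2) (by norm_num) fun x ⟨h₁, h₂⟩ => by
      rw [pentagonLower, pentagonUpper, abs_of_nonneg (by linarith), min_eq_right (by linarith),
        min_eq_right (by linarith)]; ring]
  norm_num

theorem stmt16 :
    (∫ u in convexHull ℝ {((-3:ℝ),(0:ℝ)), (-2,1), (2,1), (3,0), (0,-3)},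
        (2 + min 0 (-u.1) + min 0 u.2 + (u.1 - u.2 - 1)/2)) = 23/3 := by
  have hint := ContinuousOn.integrableOn_compact (μ := volume) isCompact_pentagon (by fun_prop :
    Continuous fun u : ℝ × ℝ => 2 + min 0 (-u.1) + min 0 u.2 + (u.1 - u.2 - 1) / 2).continuousOn
  rw [Measure.volume_eq_prod] at hint
  rw [convexHull_pentagon, Measure.volume_eq_prod,
    setIntegral_eq_integral_setIntegral_Icc measurableSet_Icc
      (by unfold pentagonLower; fun_prop) (by unfold pentagonUpper; fun_prop) hint,
    setIntegral_congr_fun measurableSet_Icc fun x hx =>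
      integral_vertical_slice x (pentagonLower_nonpos hx) (pentagonUpper_nonneg hx)]
  exact integral_pentagon_profile
end

section
/- Let F(ξ) = ∫_{−1}^{2} u · (2 + min(−u,0) + 2(u−2)/3) · e^{ξu} du. Then F has a unique real zero ξ, and ξ ∈ (−0.971, −0.970). -/
/-!
Write `F(ξ) = ∫_{-1}^{2} u w(u) e^{ξu} du`, where `w ≥ 0` on `[-1, 2]` and vanishes only at the
endpoints. For `ξ₁ < ξ₂` and `u ≠ 0` we have `u (e^{ξ₂u} - e^{ξ₁u}) > 0`, so `F` is strictly
increasing. The integrand is piecewise quadratic times an exponential, which gives the closed form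
`F(ξ) = 2/(3ξ³) (3 - e^{-ξ}(ξ + 2) + e^{2ξ}(ξ - 1))` for `ξ ≠ 0`; Taylor bounds on `e^{0.971}` and
`e^{0.970}` show that `F(-0.971) < 0 < F(-0.970)`, and the intermediate value theorem finishes.
-/

open MeasureTheory Set

theorem intervalIntegral_pos_of_nonneg_of_pos_off {f : ℝ → ℝ} {a b c : ℝ}
    (hfi : IntervalIntegrable f volume a b) (hab : a < b) (hnonneg : ∀ x ∈ Icc a b, 0 ≤ f x)
    (hpos : ∀ x ∈ Ioo a b, x ≠ c → 0 < f x) : 0 < ∫ x in a..b, f x := by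
  have hae : 0 ≤ᵐ[volume.restrict (uIoc a b)] f := by
    rw [uIoc_of_le hab.le]
    exact ae_restrict_of_forall_mem measurableSet_Ioc fun x hx =>
      hnonneg x (Ioc_subset_Icc_self hx)
  have hsupp : Ioo a b \ {c} ⊆ Function.support f ∩ Ioc a b := fun x hx =>
    ⟨(hpos x hx.1 hx.2).ne', Ioo_subset_Ioc_self hx.1⟩
  rw [intervalIntegral.integral_pos_iff_support_of_nonneg_ae' hae hfi]
  refine ⟨hab, lt_of_lt_of_le ?_ (measure_mono hsupp)⟩
  rw [measure_sdiff_null (measure_singleton c)]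
  exact (Measure.measure_Ioo_pos _).mpr hab

theorem mul_sub_exp_pos {u ξ₁ ξ₂ : ℝ} (hξ : ξ₁ < ξ₂) (hu : u ≠ 0) :
    0 < u * (Real.exp (ξ₂ * u) - Real.exp (ξ₁ * u)) := by
  rcases hu.lt_or_gt with hu | hu
  · exact mul_pos_of_neg_of_neg hu
      (sub_neg.2 (Real.exp_lt_exp.2 (mul_lt_mul_of_neg_right hξ hu)))
  · exact mul_pos hu (sub_pos.2 (Real.exp_lt_exp.2 (mul_lt_mul_of_pos_right hξ hu)))

theorem strictMono_integral_mul_exp {w : ℝ → ℝ} {a b : ℝ} (hab : a < b)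
    (hw : IntervalIntegrable w volume a b) (hnonneg : ∀ u ∈ Icc a b, 0 ≤ w u)
    (hpos : ∀ u ∈ Ioo a b, 0 < w u) :
    StrictMono fun ξ => ∫ u in a..b, u * w u * Real.exp (ξ * u) := by
  have hint : ∀ ξ : ℝ, IntervalIntegrable (fun u => u * w u * Real.exp (ξ * u)) volume a b :=
    fun ξ => (hw.continuousOn_mul continuousOn_id).mul_continuousOn (by fun_prop)
  intro ξ₁ ξ₂ hξ
  rw [← sub_pos, ← intervalIntegral.integral_sub (hint ξ₂) (hint ξ₁)]
  have hfactor : ∀ u, u * w u * Real.exp (ξ₂ * u) - u * w u * Real.exp (ξ₁ * u)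
      = w u * (u * (Real.exp (ξ₂ * u) - Real.exp (ξ₁ * u))) := fun u => by ring
  simp_rw [hfactor]
  refine intervalIntegral_pos_of_nonneg_of_pos_off (c := 0)
    (by simpa only [← hfactor] using (hint ξ₂).sub (hint ξ₁)) hab (fun u hu => ?_)
    fun u hu hu0 => mul_pos (hpos u hu) (mul_sub_exp_pos hξ hu0)
  rcases eq_or_ne u 0 with rfl | hu0
  · simp
  · exact mul_nonneg (hnonneg u hu) (mul_sub_exp_pos hξ hu0).le

theorem continuous_integral_mul_exp {w : ℝ → ℝ} (hw : Continuous w) (a b : ℝ) :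
    Continuous fun ξ => ∫ u in a..b, u * w u * Real.exp (ξ * u) :=
  intervalIntegral.continuous_parametric_intervalIntegral_of_continuous' (by fun_prop) a b

theorem StrictMono.existsUnique_zero_and_mem_Ioo {α : Type*} [ConditionallyCompleteLinearOrder α]
    [DenselyOrdered α] [TopologicalSpace α] [OrderTopology α] {f : α → ℝ} (hf : StrictMono f)
    {a b : α} (hc : ContinuousOn f (Icc a b)) (ha : f a < 0) (hb : 0 < f b) :
    (∃! x, f x = 0) ∧ ∀ x, f x = 0 → x ∈ Ioo a b := by
  have hzero : ∀ x, f x = 0 → x ∈ Ioo a b := fun x hx =>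
    ⟨hf.lt_iff_lt.1 (hx ▸ ha), hf.lt_iff_lt.1 (hx ▸ hb)⟩
  obtain ⟨x, -, hx⟩ := intermediate_value_Icc (hf.lt_iff_lt.1 (ha.trans hb)).le hc
    ⟨ha.le, hb.le⟩
  exact ⟨⟨x, hx, fun y hy => hf.injective (hy.trans hx.symm)⟩, hzero⟩

noncomputable def quadraticExpPrimitive (ξ α β γ u : ℝ) : ℝ :=
  Real.exp (ξ * u) * ((α * u ^ 2 + β * u + γ) / ξ - (2 * α * u + β) / ξ ^ 2 + 2 * α / ξ ^ 3)

theorem hasDerivAt_quadraticExpPrimitive {ξ : ℝ} (hξ : ξ ≠ 0) (α β γ u : ℝ) :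
    HasDerivAt (quadraticExpPrimitive ξ α β γ) ((α * u ^ 2 + β * u + γ) * Real.exp (ξ * u)) u := by
  have hexp : HasDerivAt (fun u => Real.exp (ξ * u)) (Real.exp (ξ * u) * ξ) u :=
    ((hasDerivAt_id u).const_mul ξ).exp.congr_deriv (by simp)
  have hquad : HasDerivAt (fun u => α * u ^ 2 + β * u + γ) (2 * α * u + β) u := by
    simpa [mul_comm, mul_left_comm] using
      (((hasDerivAt_pow 2 u).const_mul α).add ((hasDerivAt_id u).const_mul β)).add_const γ
  have hlin : HasDerivAt (fun u => 2 * α * u + β) (2 * α) u := by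
    simpa using ((hasDerivAt_id u).const_mul (2 * α)).add_const β
  have hpoly : HasDerivAt
      (fun u => (α * u ^ 2 + β * u + γ) / ξ - (2 * α * u + β) / ξ ^ 2 + 2 * α / ξ ^ 3)
      ((2 * α * u + β) / ξ - 2 * α / ξ ^ 2) u :=
    ((hquad.div_const ξ).sub (hlin.div_const (ξ ^ 2))).add_const _
  refine (hexp.mul hpoly).congr_deriv ?_
  field_simp
  ring

theorem integral_quadratic_mul_exp {ξ : ℝ} (hξ : ξ ≠ 0) (α β γ a b : ℝ) :
    ∫ u in a..b, (α * u ^ 2 + β * u + γ) * Real.exp (ξ * u) =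
      quadraticExpPrimitive ξ α β γ b - quadraticExpPrimitive ξ α β γ a :=
  intervalIntegral.integral_eq_sub_of_hasDerivAt
    (fun u _ => hasDerivAt_quadraticExpPrimitive hξ α β γ u)
    ((by fun_prop : Continuous _).intervalIntegrable a b)

theorem exp_mem_Ioo_of_taylor {x lo hi : ℝ} (n : ℕ) (hn : 0 < n) (hx : |x| ≤ 1)
    (hlo : lo < ∑ m ∈ Finset.range n, x ^ m / m.factorial
      - |x| ^ n * (n.succ / (n.factorial * n)))
    (hhi : ∑ m ∈ Finset.range n, x ^ m / m.factorial
      + |x| ^ n * (n.succ / (n.factorial * n)) < hi) :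
    Real.exp x ∈ Ioo lo hi := by
  have h := abs_le.1 (Real.exp_bound hx hn)
  exact ⟨by linarith [h.1], by linarith [h.2]⟩

theorem exp_971_mem : Real.exp 0.971 ∈ Ioo 2.64058 2.64059 :=
  exp_mem_Ioo_of_taylor 10 (by norm_num) (by norm_num [abs_of_nonneg])
    (by norm_num [Finset.sum_range_succ, Nat.factorial])
    (by norm_num [Finset.sum_range_succ, Nat.factorial])

theorem exp_970_mem : Real.exp 0.970 ∈ Ioo 2.63794 2.63795 :=
  exp_mem_Ioo_of_taylor 10 (by norm_num) (by norm_num [abs_of_nonneg])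
    (by norm_num [Finset.sum_range_succ, Nat.factorial])
    (by norm_num [Finset.sum_range_succ, Nat.factorial])

theorem exp_two_mul_mul_exp_neg_sq (ξ : ℝ) : Real.exp (2 * ξ) * Real.exp (-ξ) ^ 2 = 1 := by
  rw [sq, ← Real.exp_add, ← Real.exp_add, ← Real.exp_zero]; ring_nf

noncomputable def futakiWeight (u : ℝ) : ℝ := 2 + min (-u) 0 + 2 * (u - 2) / 3

noncomputable def futaki (ξ : ℝ) : ℝ :=
  ∫ u in (-1:ℝ)..2, u * futakiWeight u * Real.exp (ξ * u)

theorem futakiWeight_of_nonpos {u : ℝ} (hu : u ≤ 0) : futakiWeight u = 2 * (u + 1) / 3 := by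
  rw [futakiWeight, min_eq_right (neg_nonneg.2 hu)]; ring

theorem futakiWeight_of_nonneg {u : ℝ} (hu : 0 ≤ u) : futakiWeight u = (2 - u) / 3 := by
  rw [futakiWeight, min_eq_left (neg_nonpos.2 hu)]; ring

theorem continuous_futakiWeight : Continuous futakiWeight := by
  unfold futakiWeight; fun_prop

theorem futakiWeight_pos {u : ℝ} (hu : u ∈ Ioo (-1) 2) : 0 < futakiWeight u := by
  rcases le_total u 0 with h | h
  · rw [futakiWeight_of_nonpos h]; linarith [hu.1]
  · rw [futakiWeight_of_nonneg h]; linarith [hu.2]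

theorem futakiWeight_nonneg {u : ℝ} (hu : u ∈ Icc (-1) 2) : 0 ≤ futakiWeight u := by
  rcases le_total u 0 with h | h
  · rw [futakiWeight_of_nonpos h]; linarith [hu.1]
  · rw [futakiWeight_of_nonneg h]; linarith [hu.2]

theorem futaki_eq {ξ : ℝ} (hξ : ξ ≠ 0) :
    futaki ξ = 2 / (3 * ξ ^ 3) *
      (3 - Real.exp (-ξ) * (ξ + 2) + Real.exp (2 * ξ) * (ξ - 1)) := by
  have hint : ∀ a b : ℝ,
      IntervalIntegrable (fun u => u * futakiWeight u * Real.exp (ξ * u)) volume a b := fun a b =>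
    ((continuous_id.mul continuous_futakiWeight).mul (by fun_prop)).intervalIntegrable a b
  have hleft : ∫ u in (-1:ℝ)..0, u * futakiWeight u * Real.exp (ξ * u)
      = ∫ u in (-1:ℝ)..0, (2 / 3 * u ^ 2 + 2 / 3 * u + 0) * Real.exp (ξ * u) := by
    refine intervalIntegral.integral_congr fun u hu => ?_
    rw [uIcc_of_le (by norm_num)] at hu
    simp only [futakiWeight_of_nonpos hu.2]; ring
  have hright : ∫ u in (0:ℝ)..2, u * futakiWeight u * Real.exp (ξ * u)
      = ∫ u in (0:ℝ)..2, (-1 / 3 * u ^ 2 + 2 / 3 * u + 0) * Real.exp (ξ * u) := by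
    refine intervalIntegral.integral_congr fun u hu => ?_
    rw [uIcc_of_le (by norm_num)] at hu
    simp only [futakiWeight_of_nonneg hu.1]; ring
  rw [futaki, ← intervalIntegral.integral_add_adjacent_intervals (hint _ 0) (hint 0 _), hleft,
    hright, integral_quadratic_mul_exp hξ, integral_quadratic_mul_exp hξ]
  simp only [quadraticExpPrimitive, mul_zero, Real.exp_zero, mul_neg_one, mul_comm ξ 2]
  field_simp
  ring

theorem futaki_neg : futaki (-0.971) < 0 := by
  have hs := exp_two_mul_mul_exp_neg_sq (-0.971)
  rw [futaki_eq (by norm_num)]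
  rw [neg_neg] at hs ⊢
  obtain ⟨hlo, hhi⟩ := exp_971_mem
  refine mul_neg_of_neg_of_pos (by norm_num) ?_
  nlinarith [Real.exp_pos (2 * -0.971)]

theorem futaki_pos : 0 < futaki (-0.970) := by
  have hs := exp_two_mul_mul_exp_neg_sq (-0.970)
  rw [futaki_eq (by norm_num)]
  rw [neg_neg] at hs ⊢
  obtain ⟨hlo, hhi⟩ := exp_970_mem
  refine mul_pos_of_neg_of_neg (by norm_num) ?_
  nlinarith [Real.exp_pos (2 * -0.970)]

theorem stmt17 :
    (∃! ξ : ℝ, (∫ u in (-1:ℝ)..2, u * (2 + min (-u) 0 + 2*(u-2)/3) * Real.exp (ξ * u)) = 0) ∧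
    ∀ ξ : ℝ, (∫ u in (-1:ℝ)..2, u * (2 + min (-u) 0 + 2*(u-2)/3) * Real.exp (ξ * u)) = 0 →
      ξ ∈ Set.Ioo (-0.971 : ℝ) (-0.970) := by
  have hmono : StrictMono futaki :=
    strictMono_integral_mul_exp (by norm_num) (continuous_futakiWeight.intervalIntegrable _ _)
      (fun _ => futakiWeight_nonneg) fun _ => futakiWeight_pos
  exact hmono.existsUnique_zero_and_mem_Ioo
    (continuous_integral_mul_exp continuous_futakiWeight _ _).continuousOn futaki_neg futaki_pos
end

section
/- Let F(ξ) = ∫_{−1}^{1} u · (u+1)/2 · e^{ξu} du. Then F has a unique real zero ξ, and ξ ∈ (−1.345, −1.343). -/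
/-!
`F ξ = ∫_{-1}^{1} u (u+1)/2 e^{ξu} du` is strictly increasing in `ξ`: `F η - F ξ` integrates
`u (e^{ηu} - e^{ξu}) ≥ 0` against the weight `(u+1)/2 ≥ 0`. An explicit antiderivative gives
`F ξ = (e^ξ (2ξ² - 3ξ + 2) - e^{-ξ} (ξ + 2)) / (2ξ³)` for `ξ ≠ 0`, and Taylor bounds on `exp`
show `F (-1.345) < 0 < F (-1.343)`; the intermediate value theorem gives the zero.
-/

open MeasureTheory Real Set

theorem mul_sub_exp_nonneg {ξ η : ℝ} (h : ξ ≤ η) (u : ℝ) :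
    0 ≤ u * (exp (η * u) - exp (ξ * u)) := by
  rcases le_total 0 u with hu | hu
  · exact mul_nonneg hu (sub_nonneg.2 (exp_le_exp.2 (by nlinarith)))
  · exact mul_nonneg_of_nonpos_of_nonpos hu (sub_nonpos.2 (exp_le_exp.2 (by nlinarith)))

theorem strictMono_integral_mul_mul_exp {w : ℝ → ℝ} (hw : Continuous w) {a b : ℝ}
    (ha : a ≤ 0) (hb : 0 < b) (hw_nonneg : ∀ u ∈ Icc a 0, 0 ≤ w u)
    (hw_pos : ∀ u ∈ Ioo 0 b, 0 < w u) :
    StrictMono fun ξ => ∫ u in a..b, u * w u * exp (ξ * u) := by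
  intro ξ η hξη
  set g : ℝ → ℝ := fun u => u * (exp (η * u) - exp (ξ * u)) * w u
  have hg : Continuous g := by fun_prop
  have hdiff : (∫ u in a..b, u * w u * exp (η * u)) - ∫ u in a..b, u * w u * exp (ξ * u)
      = (∫ u in a..0, g u) + ∫ u in 0..b, g u := by
    have hcont (ζ : ℝ) : Continuous fun u => u * w u * exp (ζ * u) := by fun_prop
    rw [intervalIntegral.integral_add_adjacent_intervals (hg.intervalIntegrable _ _)
      (hg.intervalIntegrable _ _), ← intervalIntegral.integral_sub
      ((hcont η).intervalIntegrable _ _) ((hcont ξ).intervalIntegrable _ _)]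
    congr 1 with u; ring
  have hleft : 0 ≤ ∫ u in a..0, g u := intervalIntegral.integral_nonneg ha fun u hu =>
    mul_nonneg (mul_sub_exp_nonneg hξη.le u) (hw_nonneg u hu)
  have hright : 0 < ∫ u in 0..b, g u :=
    intervalIntegral.intervalIntegral_pos_of_pos_on (hg.intervalIntegrable _ _)
      (fun u hu => mul_pos (mul_pos hu.1 (sub_pos.2 (exp_lt_exp.2
        (mul_lt_mul_of_pos_right hξη hu.1)))) (hw_pos u hu)) hb
  dsimp only
  linarith

theorem integral_mul_mul_exp_eq {ξ : ℝ} (hξ : ξ ≠ 0) :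
    ∫ u in (-1:ℝ)..1, u * ((u+1)/2) * exp (ξ * u)
      = (exp ξ * (2 * ξ ^ 2 - 3 * ξ + 2) - exp (-ξ) * (ξ + 2)) / (2 * ξ ^ 3) := by
  have hderiv : ∀ u ∈ uIcc (-1:ℝ) 1, HasDerivAt
      (fun u => exp (ξ * u) * (ξ ^ 2 * (u ^ 2 + u) - ξ * (2 * u + 1) + 2) / (2 * ξ ^ 3))
      (u * ((u+1)/2) * exp (ξ * u)) u := by
    intro u _
    have hexp : HasDerivAt (fun u => exp (ξ * u)) (exp (ξ * u) * ξ) u := by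
      simpa using ((hasDerivAt_id' u).const_mul ξ).exp
    have hq : HasDerivAt (fun u => ξ ^ 2 * (u ^ 2 + u) - ξ * (2 * u + 1) + 2)
        (ξ ^ 2 * (2 * u + 1) - 2 * ξ) u := by
      refine ((((hasDerivAt_pow 2 u).add (hasDerivAt_id' u)).const_mul (ξ ^ 2)).sub
        ((((hasDerivAt_id' u).const_mul 2).add_const 1).const_mul ξ)).add_const 2
        |>.congr_deriv ?_
      norm_num
      ring
    refine (hexp.mul hq).div_const (2 * ξ ^ 3) |>.congr_deriv ?_
    field_simp
    ring
  rw [intervalIntegral.integral_eq_sub_of_hasDerivAt hderiv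
    (Continuous.intervalIntegrable (by fun_prop) _ _), mul_one, mul_neg_one]
  ring

theorem exp_2_69_lt : exp 2.69 < 14.735 := by
  have h : exp 0.6725 < 1.9592 := by
    have hb := exp_bound' (x := 0.6725) (by norm_num) (by norm_num) (n := 8) (by norm_num)
    norm_num [Finset.sum_range_succ, Nat.factorial] at hb ⊢
    linarith
  calc exp 2.69 = exp 0.6725 ^ 4 := by rw [← exp_nat_mul]; norm_num
    _ < 1.9592 ^ 4 := by gcongr
    _ < 14.735 := by norm_num

theorem lt_exp_2_686 : 14.67 < exp 2.686 := by
  have h : 1.957169 < exp 0.6715 := by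
    have hb := sum_le_exp_of_nonneg (x := 0.6715) (by norm_num) 8
    norm_num [Finset.sum_range_succ, Nat.factorial] at hb ⊢
    linarith
  calc (14.67 : ℝ) < 1.957169 ^ 4 := by norm_num
    _ < exp 0.6715 ^ 4 := by gcongr
    _ = exp 2.686 := by rw [← exp_nat_mul]; norm_num

theorem integral_mul_mul_exp_neg_1_345_neg :
    ∫ u in (-1:ℝ)..1, u * ((u+1)/2) * exp (-1.345 * u) < 0 := by
  rw [integral_mul_mul_exp_eq (by norm_num)]
  refine div_neg_of_pos_of_neg ?_ (by norm_num)
  have hsplit : exp (-(-1.345)) = exp (-1.345) * exp 2.69 := by rw [← exp_add]; norm_num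
  have := mul_pos (exp_pos (-1.345)) (show (0:ℝ) < 9.65305 - exp 2.69 * 0.655 by
    linarith [exp_2_69_lt])
  rw [hsplit]
  linarith

theorem integral_mul_mul_exp_neg_1_343_pos :
    0 < ∫ u in (-1:ℝ)..1, u * ((u+1)/2) * exp (-1.343 * u) := by
  rw [integral_mul_mul_exp_eq (by norm_num)]
  refine div_pos_of_neg_of_neg ?_ (by norm_num)
  have hsplit : exp (-(-1.343)) = exp (-1.343) * exp 2.686 := by rw [← exp_add]; norm_num
  have := mul_pos (exp_pos (-1.343)) (show (0:ℝ) < exp 2.686 * 0.657 - 9.636298 by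
    linarith [lt_exp_2_686])
  rw [hsplit]
  linarith

theorem stmt18 :
    (∃! ξ : ℝ, (∫ u in (-1:ℝ)..1, u * ((u+1)/2) * Real.exp (ξ * u)) = 0) ∧
    ∀ ξ : ℝ, (∫ u in (-1:ℝ)..1, u * ((u+1)/2) * Real.exp (ξ * u)) = 0 →
      ξ ∈ Set.Ioo (-1.345 : ℝ) (-1.343) := by
  have hmono : StrictMono fun ξ : ℝ => ∫ u in (-1:ℝ)..1, u * ((u+1)/2) * exp (ξ * u) :=
    strictMono_integral_mul_mul_exp (by fun_prop) (by norm_num) one_pos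
      (fun u hu => by linarith [hu.1]) (fun u hu => by linarith [hu.1])
  have hcont : Continuous fun ξ : ℝ => ∫ u in (-1:ℝ)..1, u * ((u+1)/2) * exp (ξ * u) :=
    intervalIntegral.continuous_parametric_intervalIntegral_of_continuous' (by fun_prop) _ _
  have hlo := integral_mul_mul_exp_neg_1_345_neg
  have hhi := integral_mul_mul_exp_neg_1_343_pos
  have hloc : ∀ ξ : ℝ, (∫ u in (-1:ℝ)..1, u * ((u+1)/2) * exp (ξ * u)) = 0 →
      ξ ∈ Ioo (-1.345 : ℝ) (-1.343) := fun ξ hξ =>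
    ⟨hmono.lt_iff_lt.1 (hξ ▸ hlo), hmono.lt_iff_lt.1 (hξ ▸ hhi)⟩
  obtain ⟨ξ₀, -, hξ₀⟩ := intermediate_value_Ioo (by norm_num) hcont.continuousOn ⟨hlo, hhi⟩
  exact ⟨⟨ξ₀, hξ₀, fun ζ hζ => hmono.injective (hζ.trans hξ₀.symm)⟩, hloc⟩
end
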